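/- For a permutation π of {1, ..., n} with 1 ≤_T π ≤_T c where c is the n-cycle (1 2 ... n), the partition of {1,...,n} given by the cycles of π (including fixed points as singleton blocks) is a classical noncrossing partition, and the map π ↦ {cycles of π} is an order isomorphism between the poset of noncrossing partitions of the symmetric group S_n (under absolute order) and the poset of classical noncrossing partitions of {1,...,n} ordered by refinement. -/

import Mathlib

/-- The absolute length of a permutation: the minimal number of transpositions
whose product is the permutation. -/
noncomputable def absLength {α : Type*} [DecidableEq α] [Fintype α] (π : Equiv.Perm α) : ℕ :=
  sInf {k | ∃ l : List (Equiv.Perm α), l.length = k ∧ (∀ t ∈ l, t.IsSwap) ∧ l.prod = π}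

/-- The absolute order on the symmetric group. -/
def absLe {α : Type*} [DecidableEq α] [Fintype α] (u v : Equiv.Perm α) : Prop :=
  absLength v = absLength u + absLength (u⁻¹ * v)

/-- The Coxeter element `c = s₁ s₂ ⋯ sₙ = (1 2 ⋯ n+1)` of `S_{n+1}`. -/
def coxeterA (n : ℕ) : Equiv.Perm (Fin (n + 1)) :=
  (List.ofFn fun i : Fin n => Equiv.swap i.castSucc i.succ).prod

/-- A classical noncrossing partition of `{1, …, m}` (modelled by `Fin m`). -/
def IsNCPartition {m : ℕ} (P : Set (Finset (Fin m))) : Prop :=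
  (∀ B ∈ P, B.Nonempty) ∧ (∀ x : Fin m, ∃! B, B ∈ P ∧ x ∈ B) ∧
    ¬ ∃ (a b c d : Fin m) (B C : Finset (Fin m)), B ∈ P ∧ C ∈ P ∧ B ≠ C ∧
      a < b ∧ b < c ∧ c < d ∧ a ∈ B ∧ c ∈ B ∧ b ∈ C ∧ d ∈ C

/-- The partition of `{1, …, m}` given by the cycles of a permutation `π`
(fixed points giving singleton blocks). -/
noncomputable def cycleBlocks {m : ℕ} (π : Equiv.Perm (Fin m)) : Set (Finset (Fin m)) :=
  {B | ∃ a : Fin m,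
    B = @Finset.filter _ (fun b => π.SameCycle a b) (Classical.decPred _) Finset.univ}

/-- Refinement order on partitions given by sets of blocks. -/
def Refines {m : ℕ} (P Q : Set (Finset (Fin m))) : Prop :=
  ∀ B ∈ P, ∃ C ∈ Q, B ⊆ C

/-!
Multiplying a permutation by a transposition `(u v)` merges the cycles of `u` and `v` when they
are distinct and splits their common cycle otherwise. Hence `absLength π = n - #cycles π`, and
`π ≤_T σ` exactly when `σ` is reached from `π` by merges staying below `σ`.

Call `π` increasing if it sends every point to the next point of its cycle, cyclically. An
increasing permutation is determined by its cycle partition, and every partition comes from one.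
The long cycle `c` is increasing with one noncrossing cycle. Walking down from `c`, each step
splits a cycle of an increasing noncrossing permutation by some `(u v)` with `u < v`, into its
points inside and outside `[u, v)`; the result is again increasing and noncrossing. Conversely,
if `π` is increasing and noncrossing and its cycles refine those of an increasing `σ ≠ π`, some
cycle of `σ` can be cut along an interval without cutting a cycle of `π`, which gives `π ≤_T σ`
by induction on `absLength σ`.
-/

open Equiv Finset

namespace Equiv.Perm

variable {α : Type*}

section SameCycle

variable [Finite α] {π σ : Perm α} {x y : α}

theorem SameCycle.mem_of_mapsTo {s : Set α} (hs : Set.MapsTo π s s) (hx : x ∈ s)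
    (h : π.SameCycle x y) : y ∈ s := by
  obtain ⟨i, rfl⟩ := h.exists_nat_pow_eq
  exact hs.perm_pow i hx

theorem SameCycle.of_sameCycle_apply
    (hσ : ∀ z, π.SameCycle x z → π z ≠ x → σ.SameCycle z (π z)) (h : π.SameCycle x y) :
    σ.SameCycle x y := by
  refine (h.mem_of_mapsTo (s := {z | π.SameCycle x z ∧ σ.SameCycle x z}) ?_ ⟨.rfl, .rfl⟩).2
  rintro z ⟨hπ, hσz⟩
  refine ⟨sameCycle_apply_right.2 hπ, ?_⟩
  by_cases hz : π z = x
  · rw [hz]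
  · exact hσz.trans (hσ z hπ hz)

theorem sameCycle_iff_of_eqOn (h : ∀ z, π.SameCycle x z → σ z = π z) :
    σ.SameCycle x y ↔ π.SameCycle x y := by
  refine ⟨fun hσ => hσ.mem_of_mapsTo (s := {z | π.SameCycle x z}) (fun z hz => ?_) .rfl,
    .of_sameCycle_apply fun z hz _ => ?_⟩
  · rw [Set.mem_ofPred_eq, h z hz]
    exact sameCycle_apply_right.2 hz
  · rw [← h z hz]
    exact sameCycle_apply_right.2 .rfl

end SameCycle

open Classical in
noncomputable def cycleBlock [Fintype α] (π : Perm α) (x : α) : Finset α :=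
  univ.filter (π.SameCycle x)

section CycleBlock

variable [Fintype α] {π : Perm α} {x y : α}

@[simp]
theorem mem_cycleBlock : y ∈ π.cycleBlock x ↔ π.SameCycle x y := by
  simp [cycleBlock]

theorem cycleBlock_eq_cycleBlock_iff : π.cycleBlock x = π.cycleBlock y ↔ π.SameCycle x y := by
  refine ⟨fun h => mem_cycleBlock.1 (h ▸ mem_cycleBlock.2 .rfl), fun h => ?_⟩
  ext z
  simp only [mem_cycleBlock]
  exact ⟨h.symm.trans, h.trans⟩

theorem cycleBlock_nonempty (π : Perm α) (x : α) : (π.cycleBlock x).Nonempty :=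
  ⟨x, mem_cycleBlock.2 .rfl⟩

end CycleBlock

section Transposition

variable [Fintype α] [DecidableEq α] {π : Perm α} {u v x y : α}

theorem cycleBlock_swap_mul_of_not_mem (hx : x ∉ π.cycleBlock u ∪ π.cycleBlock v) :
    (swap u v * π).cycleBlock x = π.cycleBlock x := by
  simp only [mem_union, mem_cycleBlock, not_or] at hx
  ext y
  simp only [mem_cycleBlock]
  refine sameCycle_iff_of_eqOn fun z hz => swap_apply_of_ne_of_ne ?_ ?_ <;> rintro rfl
  · exact hx.1 (sameCycle_apply_right.2 hz).symm
  · exact hx.2 (sameCycle_apply_right.2 hz).symm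

theorem sameCycle_swap_mul_of_sameCycle_left (huv : ¬ π.SameCycle u v) (h : π.SameCycle u y) :
    (swap u v * π).SameCycle u y := by
  refine .of_sameCycle_apply (fun z hz hzu => ?_) h
  have hzv : π z ≠ v := fun hzv => huv (hzv ▸ sameCycle_apply_right.2 hz)
  rw [← show (swap u v * π) z = π z from swap_apply_of_ne_of_ne hzu hzv]
  exact sameCycle_apply_right.2 .rfl

theorem sameCycle_swap_mul_of_not_sameCycle (huv : ¬ π.SameCycle u v) :
    (swap u v * π).SameCycle u v :=
  (sameCycle_swap_mul_of_sameCycle_left huv (⟨-1, by simp⟩ : π.SameCycle u (π⁻¹ u))).trans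
    ⟨1, by simp⟩

theorem cycleBlock_swap_mul_of_not_sameCycle (huv : ¬ π.SameCycle u v) :
    (swap u v * π).cycleBlock u = π.cycleBlock u ∪ π.cycleBlock v := by
  ext y
  simp only [mem_union, mem_cycleBlock]
  refine ⟨fun h => h.mem_of_mapsTo (s := {z | π.SameCycle u z ∨ π.SameCycle v z})
    (fun z hz => ?_) (.inl .rfl), fun h => h.elim (sameCycle_swap_mul_of_sameCycle_left huv)
      fun h => (sameCycle_swap_mul_of_not_sameCycle huv).trans ?_⟩
  · rw [Set.mem_ofPred, ← sameCycle_apply_right, ← sameCycle_apply_right (y := z)] at hz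
    change π.SameCycle u (swap u v (π z)) ∨ π.SameCycle v (swap u v (π z))
    rcases eq_or_ne (π z) u with h₁ | h₁
    · simpa [h₁] using .inr .rfl
    rcases eq_or_ne (π z) v with h₂ | h₂
    · simpa [h₂] using .inl .rfl
    rwa [swap_apply_of_ne_of_ne h₁ h₂]
  · rw [swap_comm]
    exact sameCycle_swap_mul_of_sameCycle_left (fun h' => huv h'.symm) h

theorem not_sameCycle_swap_mul_of_sameCycle (huv : u ≠ v) (h : π.SameCycle u v) :
    ¬ (swap u v * π).SameCycle u v := by
  have hex : ∃ k, (π ^ (k + 1)) u = v := by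
    obtain ⟨_ | k, hk⟩ := h.exists_nat_pow_eq
    · exact absurd hk huv
    · exact ⟨k, hk⟩
  classical
  obtain ⟨k, hk, hkmin⟩ : ∃ k, (π ^ (k + 1)) u = v ∧ ∀ j < k, (π ^ (j + 1)) u ≠ v :=
    ⟨Nat.find hex, Nat.find_spec hex, fun j hj => Nat.find_min hex hj⟩
  have hne : ∀ i ≤ k, (π ^ i) u ≠ v := by
    rintro (_ | i) hi
    · exact huv
    · exact hkmin i hi
  -- the arc `u, π u, …, π^k u` of the cycle, which stops just before `v`, is closed under
  -- `swap u v * π`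
  have hmaps : Set.MapsTo (swap u v * π) {z | ∃ i ≤ k, (π ^ i) u = z}
      {z | ∃ i ≤ k, (π ^ i) u = z} := by
    rintro _ ⟨i, hi, rfl⟩
    rw [mul_apply, ← mul_apply π, ← pow_succ']
    rcases hi.lt_or_eq with hi | rfl
    · have hu : (π ^ (i + 1)) u ≠ u := by
        intro hu
        refine hkmin (k - i - 1) (by omega) ?_
        rw [← hu, ← mul_apply, ← pow_add, show k - i - 1 + 1 + (i + 1) = k + 1 by omega, hk]
      exact ⟨i + 1, hi, (swap_apply_of_ne_of_ne hu (hne _ hi)).symm⟩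
    · exact ⟨0, Nat.zero_le _, by rw [hk, swap_apply_right, pow_zero, one_apply]⟩
  intro hσ
  obtain ⟨i, hi, hiv⟩ := hσ.mem_of_mapsTo hmaps ⟨0, Nat.zero_le _, rfl⟩
  exact hne i hi hiv

theorem SameCycle.swap_mul_of_not_sameCycle (huv : ¬ π.SameCycle u v) (h : π.SameCycle x y) :
    (swap u v * π).SameCycle x y := by
  by_cases hx : x ∈ π.cycleBlock u ∪ π.cycleBlock v
  · have hU : ∀ z ∈ π.cycleBlock u ∪ π.cycleBlock v, (swap u v * π).SameCycle u z := by
      intro z hz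
      rwa [← mem_cycleBlock, cycleBlock_swap_mul_of_not_sameCycle huv]
    refine (hU x hx).symm.trans (hU y ?_)
    simp only [mem_union, mem_cycleBlock] at hx ⊢
    exact hx.imp (·.trans h) (·.trans h)
  · rw [← mem_cycleBlock, cycleBlock_swap_mul_of_not_mem hx]
    exact mem_cycleBlock.2 h

noncomputable def numBlocks (π : Perm α) : ℕ :=
  (univ.image π.cycleBlock).card

theorem numBlocks_le_card (π : Perm α) : π.numBlocks ≤ Fintype.card α :=
  card_image_le

theorem numBlocks_one : (1 : Perm α).numBlocks = Fintype.card α := by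
  refine card_image_of_injective _ fun x y h => ?_
  rwa [cycleBlock_eq_cycleBlock_iff, sameCycle_one] at h

theorem numBlocks_eq_card_add_card {U : Finset α}
    (hU : ∀ x ∈ U, ∀ y, π.SameCycle x y → y ∈ U) :
    π.numBlocks = ((univ.filter (· ∈ U)).image π.cycleBlock).card +
      ((univ.filter (· ∉ U)).image π.cycleBlock).card := by
  rw [numBlocks, ← card_union_of_disjoint, ← image_union, filter_union_filter_not_eq]
  simp only [disjoint_left, mem_image, mem_filter, mem_univ, true_and, not_exists, not_and]
  rintro _ ⟨x, hx, rfl⟩ y hy hxy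
  exact hy (hU x hx y (mem_cycleBlock.1 (hxy ▸ mem_cycleBlock.2 .rfl)).symm)

theorem numBlocks_eq_numBlocks_swap_mul_add_one (huv : ¬ π.SameCycle u v) :
    π.numBlocks = (swap u v * π).numBlocks + 1 := by
  set U := π.cycleBlock u ∪ π.cycleBlock v
  have hσU : (swap u v * π).cycleBlock u = U := cycleBlock_swap_mul_of_not_sameCycle huv
  have hπ : ∀ x ∈ U, ∀ y, π.SameCycle x y → y ∈ U := by
    simp only [U, mem_union, mem_cycleBlock]
    exact fun x hx y hxy => hx.imp (·.trans hxy) (·.trans hxy)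
  have hσ : ∀ x ∈ U, ∀ y, (swap u v * π).SameCycle x y → y ∈ U := by
    simp only [← hσU, mem_cycleBlock]
    exact fun x hx y hxy => hx.trans hxy
  have hπU : (univ.filter (· ∈ U)).image π.cycleBlock = {π.cycleBlock u, π.cycleBlock v} := by
    ext B
    simp only [U, mem_image, mem_filter, mem_univ, true_and, mem_union, mem_insert,
      mem_singleton, mem_cycleBlock]
    constructor
    · rintro ⟨x, hx | hx, rfl⟩
      · exact .inl (cycleBlock_eq_cycleBlock_iff.2 hx.symm)
      · exact .inr (cycleBlock_eq_cycleBlock_iff.2 hx.symm)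
    · rintro (rfl | rfl)
      · exact ⟨u, .inl .rfl, rfl⟩
      · exact ⟨v, .inr .rfl, rfl⟩
  have hσU' : (univ.filter (· ∈ U)).image (swap u v * π).cycleBlock = {U} := by
    refine eq_singleton_iff_unique_mem.2 ⟨mem_image.2 ⟨u, ?_, hσU⟩, ?_⟩
    · exact mem_filter.2 ⟨mem_univ u, mem_union_left _ (mem_cycleBlock.2 .rfl)⟩
    · simp only [mem_image, mem_filter, mem_univ, true_and]
      rintro _ ⟨x, hx, rfl⟩
      rw [← hσU] at hx ⊢
      exact cycleBlock_eq_cycleBlock_iff.2 (mem_cycleBlock.1 hx).symm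
  have hcompl : (univ.filter (· ∉ U)).image (swap u v * π).cycleBlock =
      (univ.filter (· ∉ U)).image π.cycleBlock :=
    image_congr fun x hx => cycleBlock_swap_mul_of_not_mem (mem_filter.1 hx).2
  have hAB : π.cycleBlock u ≠ π.cycleBlock v := fun h => huv (cycleBlock_eq_cycleBlock_iff.1 h)
  rw [numBlocks_eq_card_add_card hπ, numBlocks_eq_card_add_card hσ, hπU, hσU', hcompl,
    card_pair hAB, card_singleton]
  omega

theorem numBlocks_swap_mul_of_sameCycle (huv : u ≠ v) (h : π.SameCycle u v) :
    (swap u v * π).numBlocks = π.numBlocks + 1 := by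
  simpa using numBlocks_eq_numBlocks_swap_mul_add_one (not_sameCycle_swap_mul_of_sameCycle huv h)

theorem numBlocks_le_numBlocks_swap_mul_add_one (π : Perm α) (u v : α) :
    π.numBlocks ≤ (swap u v * π).numBlocks + 1 := by
  by_cases huv : π.SameCycle u v
  · obtain rfl | huv' := eq_or_ne u v
    · rw [swap_self, ← one_def, one_mul]
      omega
    · rw [numBlocks_swap_mul_of_sameCycle huv' huv]
      omega
  · exact (numBlocks_eq_numBlocks_swap_mul_add_one huv).le

end Transposition

end Equiv.Perm

section AbsoluteOrder

open Equiv.Perm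

variable {α : Type*} [Fintype α] [DecidableEq α] {π σ : Perm α}

theorem exists_isSwap_prod_eq (π : Perm α) :
    ∃ l : List (Perm α), l.length = Fintype.card α - π.numBlocks ∧ (∀ t ∈ l, t.IsSwap) ∧
      l.prod = π := by
  by_cases hπ : π = 1
  · exact ⟨[], by simp [hπ, numBlocks_one], by simp, hπ.symm⟩
  obtain ⟨x, hx⟩ : ∃ x, π x ≠ x := not_forall.1 fun h => hπ (Equiv.ext h)
  have hsplit := numBlocks_swap_mul_of_sameCycle (Ne.symm hx) (⟨1, rfl⟩ : π.SameCycle x (π x))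
  have hle := numBlocks_le_card (swap x (π x) * π)
  obtain ⟨l, hl, hswap, hprod⟩ := exists_isSwap_prod_eq (swap x (π x) * π)
  refine ⟨swap x (π x) :: l, ?_, List.forall_mem_cons.2 ⟨⟨x, π x, Ne.symm hx, rfl⟩, hswap⟩, ?_⟩
  · rw [List.length_cons, hl]
    omega
  · rw [List.prod_cons, hprod, swap_mul_self_mul]
termination_by Fintype.card α - π.numBlocks
decreasing_by omega

theorem card_le_numBlocks_prod_add_length (l : List (Perm α)) (hl : ∀ t ∈ l, t.IsSwap) :
    Fintype.card α ≤ l.prod.numBlocks + l.length := by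
  induction l with
  | nil => simp [numBlocks_one]
  | cons t l ih =>
    obtain ⟨u, v, -, rfl⟩ := hl t List.mem_cons_self
    have := numBlocks_le_numBlocks_swap_mul_add_one l.prod u v
    have := ih fun t ht => hl t (List.mem_cons_of_mem _ ht)
    simp only [List.prod_cons, List.length_cons]
    omega

theorem absLength_eq_card_sub_numBlocks (π : Perm α) :
    absLength π = Fintype.card α - π.numBlocks := by
  obtain ⟨l, hl, hswap, hprod⟩ := exists_isSwap_prod_eq π
  refine le_antisymm (Nat.sInf_le ⟨l, hl, hswap, hprod⟩) (le_csInf ⟨_, l, hl, hswap, hprod⟩ ?_)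
  rintro _ ⟨l', rfl, hswap', rfl⟩
  have := card_le_numBlocks_prod_add_length l' hswap'
  omega

theorem absLength_mul_le (π σ : Perm α) : absLength (π * σ) ≤ absLength π + absLength σ := by
  obtain ⟨l, hl, hswap, rfl⟩ := exists_isSwap_prod_eq π
  obtain ⟨l', hl', hswap', rfl⟩ := exists_isSwap_prod_eq σ
  calc absLength (l.prod * l'.prod) ≤ (l ++ l').length :=
        Nat.sInf_le ⟨_, rfl, fun t ht => (List.mem_append.1 ht).elim (hswap t) (hswap' t),
          List.prod_append⟩
    _ = absLength l.prod + absLength l'.prod := by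
      rw [List.length_append, hl, hl', absLength_eq_card_sub_numBlocks,
        absLength_eq_card_sub_numBlocks]

theorem absLength_one : absLength (1 : Perm α) = 0 := by
  rw [absLength_eq_card_sub_numBlocks, numBlocks_one, Nat.sub_self]

theorem absLength_swap {u v : α} (huv : u ≠ v) : absLength (swap u v) = 1 := by
  have h := numBlocks_eq_numBlocks_swap_mul_add_one (π := 1) (u := u) (v := v)
    (by rwa [sameCycle_one])
  rw [mul_one, numBlocks_one] at h
  rw [absLength_eq_card_sub_numBlocks]
  omega

theorem absLe_refl (π : Perm α) : absLe π π := by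
  rw [absLe, inv_mul_cancel, absLength_one, add_zero]

theorem absLe_trans {τ : Perm α} (h₁ : absLe π σ) (h₂ : absLe σ τ) : absLe π τ := by
  have h₃ : absLength (π⁻¹ * τ) ≤ absLength (π⁻¹ * σ) + absLength (σ⁻¹ * τ) := by
    simpa [mul_assoc] using absLength_mul_le (π⁻¹ * σ) (σ⁻¹ * τ)
  have h₄ : absLength τ ≤ absLength π + absLength (π⁻¹ * τ) := by
    simpa using absLength_mul_le π (π⁻¹ * τ)
  rw [absLe] at *
  omega

theorem absLe_swap_mul_of_not_sameCycle {u v : α} (huv : ¬ π.SameCycle u v) :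
    absLe π (swap u v * π) := by
  have hu : π⁻¹ u ≠ π⁻¹ v := π⁻¹.injective.ne fun h => huv (h ▸ .rfl)
  have hconj : π⁻¹ * (swap u v * π) = swap (π⁻¹ u) (π⁻¹ v) := by
    rw [swap_apply_apply, inv_inv, mul_assoc]
  have := numBlocks_eq_numBlocks_swap_mul_add_one huv
  have := numBlocks_le_card π
  rw [absLe, hconj, absLength_swap hu, absLength_eq_card_sub_numBlocks,
    absLength_eq_card_sub_numBlocks]
  omega

theorem exists_absLe_swap_mul (h : absLe π σ) (hne : π ≠ σ) :
    ∃ u v, ¬ π.SameCycle u v ∧ absLe (swap u v * π) σ ∧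
      absLength ((swap u v * π)⁻¹ * σ) < absLength (π⁻¹ * σ) := by
  obtain ⟨x, hx⟩ : ∃ x, (π⁻¹ * σ) x ≠ x :=
    not_forall.1 fun h' => hne (inv_mul_eq_one.1 (Equiv.ext h'))
  rw [absLe] at h
  -- splitting a cycle of `π⁻¹ * σ` by `t` turns `π * t` into a merge of two cycles of `π`
  set ρ := π⁻¹ * σ
  set t := swap x (ρ x)
  have hρ : (t * ρ).numBlocks = ρ.numBlocks + 1 :=
    numBlocks_swap_mul_of_sameCycle (Ne.symm hx) ⟨1, rfl⟩
  have hπt : swap (π x) (π (ρ x)) * π = π * t := (mul_swap_eq_swap_mul π x (ρ x)).symm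
  have hρt : (π * t)⁻¹ * σ = t * ρ := by
    rw [mul_inv_rev, swap_inv, mul_assoc]
  have hup : absLength (π * t) ≤ absLength π + 1 :=
    (absLength_mul_le π t).trans_eq (by rw [absLength_swap (Ne.symm hx)])
  have hdown : absLength σ ≤ absLength (π * t) + absLength (t * ρ) := by
    have := absLength_mul_le (π * t) ((π * t)⁻¹ * σ)
    rwa [mul_inv_cancel_left, hρt] at this
  have hρlen : absLength (t * ρ) + 1 = absLength ρ := by
    have := numBlocks_le_card (t * ρ)
    rw [absLength_eq_card_sub_numBlocks, absLength_eq_card_sub_numBlocks]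
    omega
  have hlen : absLength (π * t) = absLength π + 1 := by omega
  refine ⟨π x, π (ρ x), fun hsame => ?_, ?_, ?_⟩
  · have hsplit := numBlocks_swap_mul_of_sameCycle (π.injective.ne (Ne.symm hx)) hsame
    rw [hπt] at hsplit
    rw [absLength_eq_card_sub_numBlocks, absLength_eq_card_sub_numBlocks] at hlen
    omega
  · rw [absLe, hπt, hρt]
    omega
  · rw [hπt, hρt]
    omega

theorem absLe_induction {p : Perm α → Prop} (top : p σ)
    (step : ∀ π u v, ¬ π.SameCycle u v → absLe (swap u v * π) σ → p (swap u v * π) → p π) :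
    ∀ π, absLe π σ → p π := by
  intro π h
  induction hk : absLength (π⁻¹ * σ) using Nat.strong_induction_on generalizing π with
  | _ k ih =>
    obtain rfl | hne := eq_or_ne π σ
    · exact top
    obtain ⟨u, v, huv, hle, hlt⟩ := exists_absLe_swap_mul h hne
    exact step π u v huv hle (ih _ (hk ▸ hlt) _ hle rfl)

theorem Equiv.Perm.SameCycle.of_absLe {x y : α} (h : absLe π σ) (hxy : π.SameCycle x y) :
    σ.SameCycle x y :=
  absLe_induction (p := fun π => ∀ x y, π.SameCycle x y → σ.SameCycle x y) (fun _ _ => id)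
    (fun _ _ _ huv _ ih x y hxy => ih x y (hxy.swap_mul_of_not_sameCycle huv)) π h x y hxy

end AbsoluteOrder

namespace Finset

variable {α : Type*} [LinearOrder α] {s : Finset α} {x y : α}

def cyclicNext (s : Finset α) (x : α) : α :=
  if h : (s.filter (x < ·)).Nonempty then (s.filter (x < ·)).min' h
  else if h : s.Nonempty then s.min' h else x

theorem cyclicNext_eq_iff (hs : s.Nonempty) :
    s.cyclicNext x = y ↔
      y ∈ s ∧ ((x < y ∧ ∀ z ∈ s, x < z → y ≤ z) ∨ ((∀ z ∈ s, z ≤ x) ∧ ∀ z ∈ s, y ≤ z)) := by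
  unfold cyclicNext
  split_ifs with h
  · have hy := (s.filter (x < ·)).min'_mem h
    simp only [mem_filter] at hy
    constructor
    · rintro rfl
      exact ⟨hy.1, .inl ⟨hy.2, fun z hz hxz => min'_le _ _ (mem_filter.2 ⟨hz, hxz⟩)⟩⟩
    · rintro ⟨hys, ⟨hxy, hmin⟩ | ⟨hmax, -⟩⟩
      · exact le_antisymm (min'_le _ _ (mem_filter.2 ⟨hys, hxy⟩))
          (le_min' _ _ _ fun z hz => hmin z (mem_filter.1 hz).1 (mem_filter.1 hz).2)
      · exact absurd (hmax _ hy.1) (not_le.2 hy.2)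
  · simp only [not_nonempty_iff_eq_empty, filter_eq_empty_iff, not_lt] at h
    constructor
    · rintro rfl
      exact ⟨min'_mem s hs, .inr ⟨h, fun z hz => min'_le s z hz⟩⟩
    · rintro ⟨hys, ⟨hxy, -⟩ | ⟨-, hmin⟩⟩
      · exact absurd (h hys) (not_le.2 hxy)
      · exact le_antisymm (min'_le s y hys) (le_min' s hs y hmin)

theorem cyclicNext_mem (hs : s.Nonempty) : s.cyclicNext x ∈ s :=
  ((cyclicNext_eq_iff hs).1 rfl).1

theorem cyclicNext_injOn : Set.InjOn s.cyclicNext s := by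
  intro x hx y hy h
  have hx' := (cyclicNext_eq_iff ⟨x, hx⟩).1 (rfl : s.cyclicNext x = _)
  have hy' := (cyclicNext_eq_iff ⟨x, hx⟩).1 h.symm
  grind

theorem exists_cyclicNext_eq (hy : y ∈ s) (hmin : s.min' ⟨y, hy⟩ < y) :
    ∃ x ∈ s, x < y ∧ s.cyclicNext x = y := by
  have hne : (s.filter (· < y)).Nonempty := ⟨_, mem_filter.2 ⟨min'_mem _ _, hmin⟩⟩
  obtain ⟨hxs, hxy⟩ := mem_filter.1 ((s.filter (· < y)).max'_mem hne)
  refine ⟨_, hxs, hxy, (cyclicNext_eq_iff ⟨y, hy⟩).2 ⟨hy, .inl ⟨hxy, fun z hz hxz => ?_⟩⟩⟩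
  by_contra! hzy
  exact (le_max' _ z (mem_filter.2 ⟨hz, hzy⟩)).not_gt hxz

theorem exists_filter_Ico_eq_or_eq_sdiff {C D : Finset α} (hCD : C ⊆ D) (hC : C.Nonempty)
    (hCD' : C ≠ D) (hconv : ∀ a ∈ C, ∀ b ∈ C, ∀ e ∈ D, a ≤ e → e ≤ b → e ∈ C) :
    ∃ u ∈ D, ∃ v ∈ D, u < v ∧
      (D.filter (· ∈ Set.Ico u v) = C ∨ D.filter (· ∈ Set.Ico u v) = D \ C) := by
  have hcut : ∀ y ∈ D, C.min' hC ≤ y → y ≤ C.max' hC → y ∈ C :=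
    hconv _ (min'_mem C hC) _ (max'_mem C hC)
  by_cases hright : ∃ e ∈ D, C.max' hC < e
  · -- cut at `[min C, v)` with `v` the first point of `D` after `max C`
    have hne : (D.filter (C.max' hC < ·)).Nonempty := by simpa [Finset.Nonempty] using hright
    obtain ⟨hvD, hMv⟩ := mem_filter.1 (min'_mem _ hne)
    refine ⟨C.min' hC, hCD (min'_mem C hC), _, hvD, (min'_le C _ (max'_mem C hC)).trans_lt hMv, .inl ?_⟩
    ext y
    simp only [mem_filter, Set.mem_Ico]
    refine ⟨fun ⟨hy, hmy, hyv⟩ => hcut y hy hmy ?_, fun hy =>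
      ⟨hCD hy, min'_le C y hy, (le_max' C y hy).trans_lt hMv⟩⟩
    by_contra! hMy
    exact (min'_le _ y (mem_filter.2 ⟨hy, hMy⟩)).not_gt hyv
  · -- `C` is the top end of `D`: cut at `[min D, min C)`
    push Not at hright
    obtain ⟨e, heD, heC⟩ : ∃ e ∈ D, e ∉ C := not_subset.1 fun h => hCD' (hCD.antisymm h)
    have hem : e < C.min' hC := lt_of_not_ge fun h => heC (hcut e heD h (hright e heD))
    refine ⟨D.min' ⟨e, heD⟩, min'_mem _ _, C.min' hC, hCD (min'_mem C hC),
      (min'_le D e heD).trans_lt hem, .inr ?_⟩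
    ext y
    simp only [mem_filter, mem_sdiff, Set.mem_Ico]
    exact ⟨fun ⟨hy, _, hym⟩ => ⟨hy, fun hyC => (min'_le C y hyC).not_gt hym⟩,
      fun ⟨hy, hyC⟩ => ⟨hy, min'_le D y hy,
        lt_of_not_ge fun h => hyC (hcut y hy h (hright y hy))⟩⟩

end Finset

namespace Equiv.Perm

variable {α : Type*} [Fintype α] [LinearOrder α] {π σ τ c : Perm α} {u v x y : α}

def HasIncreasingCycles (π : Perm α) : Prop :=
  ∀ x, π x = (π.cycleBlock x).cyclicNext x

theorem cycleBlock_eq_of_apply_eq_cyclicNext {B : α → Finset α} (hmem : ∀ x, x ∈ B x)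
    (hB : ∀ x y, y ∈ B x → B y = B x) (hτ : ∀ x, τ x = (B x).cyclicNext x) (x : α) :
    τ.cycleBlock x = B x := by
  have hmaps : Set.MapsTo τ (B x) (B x) := fun z hz => by
    rw [Finset.mem_coe, hτ, hB x z hz]
    exact cyclicNext_mem ⟨x, hmem x⟩
  have hmin : ∀ y ∈ B x, τ.SameCycle ((B x).min' ⟨x, hmem x⟩) y := by
    intro y
    induction y using WellFoundedLT.induction with
    | _ y ih =>
      intro hy
      obtain hy' | hy' := ((B x).min'_le y hy).eq_or_lt
      · rw [hy']
      obtain ⟨p, hp, hpy, hnext⟩ := exists_cyclicNext_eq hy hy'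
      refine (ih p hpy hp).trans ⟨1, ?_⟩
      rw [zpow_one, hτ, hB x p hp, hnext]
  ext y
  rw [mem_cycleBlock]
  exact ⟨fun h => h.mem_of_mapsTo hmaps (hmem x),
    fun hy => (hmin x (hmem x)).symm.trans (hmin y hy)⟩

theorem hasIncreasingCycles_of_apply_eq_cyclicNext {B : α → Finset α} (hmem : ∀ x, x ∈ B x)
    (hB : ∀ x y, y ∈ B x → B y = B x) (hτ : ∀ x, τ x = (B x).cyclicNext x) :
    τ.HasIncreasingCycles := fun x => by
  rw [cycleBlock_eq_of_apply_eq_cyclicNext hmem hB hτ, hτ]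

theorem HasIncreasingCycles.eq_of_sameCycle_iff (hπ : π.HasIncreasingCycles)
    (hσ : σ.HasIncreasingCycles) (h : ∀ x y, π.SameCycle x y ↔ σ.SameCycle x y) : π = σ := by
  have hblock : π.cycleBlock = σ.cycleBlock := by
    ext x y
    simp only [mem_cycleBlock, h]
  ext x
  rw [hπ, hσ, hblock]

theorem exists_hasIncreasingCycles {B : α → Finset α} (hmem : ∀ x, x ∈ B x)
    (hB : ∀ x y, y ∈ B x → B y = B x) :
    ∃ π : Perm α, π.HasIncreasingCycles ∧ ∀ x, π.cycleBlock x = B x := by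
  have hinj : Function.Injective fun x => (B x).cyclicNext x := by
    intro x y hxy
    have hx : (B x).cyclicNext x ∈ B x := cyclicNext_mem ⟨x, hmem x⟩
    have hy : (B y).cyclicNext y ∈ B y := cyclicNext_mem ⟨y, hmem y⟩
    simp only at hxy
    rw [hxy] at hx
    have hxy' : B x = B y := (hB x _ hx).symm.trans (hB y _ hy)
    rw [hxy'] at hxy
    exact cyclicNext_injOn (hxy' ▸ hmem x) (hmem y) hxy
  let π := Equiv.ofBijective _ (Finite.injective_iff_bijective.1 hinj)
  exact ⟨π, hasIncreasingCycles_of_apply_eq_cyclicNext hmem hB fun _ => rfl,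
    cycleBlock_eq_of_apply_eq_cyclicNext hmem hB fun _ => rfl⟩

-- The filter is trivial unless `x` lies on the cycle of `u` and `v`; that cycle is cut into its
-- points inside and outside `[u, v)`.
theorem HasIncreasingCycles.swap_mul_apply (hσ : σ.HasIncreasingCycles) (huv : u < v)
    (hs : σ.SameCycle u v) (x : α) :
    (swap u v * σ) x = ((σ.cycleBlock x).filter
      fun y => σ.SameCycle u x → (x ∈ Set.Ico u v ↔ y ∈ Set.Ico u v)).cyclicNext x := by
  have hx : x ∈ (σ.cycleBlock x).filter
      fun y => σ.SameCycle u x → (x ∈ Set.Ico u v ↔ y ∈ Set.Ico u v) :=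
    mem_filter.2 ⟨mem_cycleBlock.2 .rfl, fun _ => Iff.rfl⟩
  rw [mul_apply, eq_comm, cyclicNext_eq_iff ⟨x, hx⟩]
  have hnext := (cyclicNext_eq_iff (σ.cycleBlock_nonempty x)).1 (hσ x).symm
  by_cases hux : σ.SameCycle u x
  · have hu : u ∈ σ.cycleBlock x := mem_cycleBlock.2 hux.symm
    have hv : v ∈ σ.cycleBlock x := mem_cycleBlock.2 (hux.symm.trans hs)
    simp only [hux, true_imp_iff, mem_filter, Set.mem_Ico] at hnext ⊢
    generalize σ x = y at hnext ⊢
    generalize σ.cycleBlock x = A at hnext hu hv ⊢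
    rcases eq_or_ne y u with rfl | hyu
    · rw [swap_apply_left]
      grind
    rcases eq_or_ne y v with rfl | hyv
    · rw [swap_apply_right]
      grind
    · rw [swap_apply_of_ne_of_ne hyu hyv]
      grind
  · have hux' : ∀ w, σ.SameCycle u w → σ x ≠ w := fun w hw h =>
      hux (hw.trans (sameCycle_apply_right.1 (h ▸ .rfl)))
    rw [swap_apply_of_ne_of_ne (hux' u .rfl) (hux' v hs)]
    simpa [hux] using hnext

theorem HasIncreasingCycles.cycleBlock_swap_mul (hσ : σ.HasIncreasingCycles) (huv : u < v)
    (hs : σ.SameCycle u v) (x : α) :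
    (swap u v * σ).cycleBlock x = (σ.cycleBlock x).filter
      fun y => σ.SameCycle u x → (x ∈ Set.Ico u v ↔ y ∈ Set.Ico u v) := by
  refine cycleBlock_eq_of_apply_eq_cyclicNext (fun x => ?_) (fun x y hy => ?_)
    (hσ.swap_mul_apply huv hs) x
  · exact mem_filter.2 ⟨mem_cycleBlock.2 .rfl, fun _ => Iff.rfl⟩
  · simp only [mem_filter, mem_cycleBlock] at hy
    ext z
    simp only [mem_filter, mem_cycleBlock]
    grind [SameCycle.trans, SameCycle.symm]

theorem HasIncreasingCycles.swap_mul (hσ : σ.HasIncreasingCycles) (huv : u < v)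
    (hs : σ.SameCycle u v) : (swap u v * σ).HasIncreasingCycles := fun x => by
  rw [hσ.cycleBlock_swap_mul huv hs, hσ.swap_mul_apply huv hs]

theorem HasIncreasingCycles.sameCycle_swap_mul_iff (hσ : σ.HasIncreasingCycles) (huv : u < v)
    (hs : σ.SameCycle u v) :
    (swap u v * σ).SameCycle x y ↔
      σ.SameCycle x y ∧ (σ.SameCycle u x → (x ∈ Set.Ico u v ↔ y ∈ Set.Ico u v)) := by
  rw [← mem_cycleBlock, hσ.cycleBlock_swap_mul huv hs, mem_filter, mem_cycleBlock]

def IsNoncrossing (π : Perm α) : Prop :=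
  ∀ ⦃a b c d⦄, a < b → b < c → c < d → π.SameCycle a c → π.SameCycle b d → π.SameCycle a b

theorem IsNoncrossing.swap_mul (hσ : σ.HasIncreasingCycles) (hnc : σ.IsNoncrossing)
    (huv : u < v) (hs : σ.SameCycle u v) : (swap u v * σ).IsNoncrossing := by
  intro a b c d hab hbc hcd hac hbd
  simp only [hσ.sameCycle_swap_mul_iff huv hs] at hac hbd ⊢
  have hσab := hnc hab hbc hcd hac.1 hbd.1
  refine ⟨hσab, fun hua => ?_⟩
  have hac' := hac.2 hua
  have hbd' := hbd.2 ((hua.trans hσab))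
  simp only [Set.mem_Ico] at hac' hbd' ⊢
  grind

theorem hasIncreasingCycles_and_isNoncrossing_of_absLe (hc : c.HasIncreasingCycles)
    (hcn : c.IsNoncrossing) (h : absLe π c) : π.HasIncreasingCycles ∧ π.IsNoncrossing := by
  refine absLe_induction (p := fun π => π.HasIncreasingCycles ∧ π.IsNoncrossing) ⟨hc, hcn⟩
    (fun π u v huv _ ih => ?_) π h
  obtain ⟨ih, ihn⟩ := ih
  obtain ⟨a, b, hab, hs, hswap⟩ : ∃ a b, a < b ∧ (swap u v * π).SameCycle a b ∧
      swap a b = swap u v := by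
    have hs := sameCycle_swap_mul_of_not_sameCycle huv
    rcases lt_or_gt_of_ne (fun h : u = v => huv (h ▸ .rfl)) with h | h
    · exact ⟨u, v, h, hs, rfl⟩
    · exact ⟨v, u, h, hs.symm, swap_comm v u⟩
  have hπ : π = swap a b * (swap u v * π) := by rw [hswap, swap_mul_self_mul]
  rw [hπ]
  exact ⟨ih.swap_mul hab hs, ihn.swap_mul ih hab hs⟩

theorem IsNoncrossing.exists_cycleBlock_convex (hπ : π.IsNoncrossing) {D : Finset α}
    (hD : D.Nonempty) : ∃ c ∈ D, ∀ a ∈ π.cycleBlock c, ∀ b ∈ π.cycleBlock c, ∀ e ∈ D,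
      a ≤ e → e ≤ b → e ∈ π.cycleBlock c := by
  -- take the cycle whose largest point is smallest: a cycle through a point strictly inside it
  -- would end above it, hence cross it
  obtain ⟨c, hcD, hmin⟩ :=
    D.exists_min_image (fun x => (π.cycleBlock x).max' (π.cycleBlock_nonempty x)) hD
  refine ⟨c, hcD, fun a ha b hb e heD hae heb => ?_⟩
  by_contra hce
  have hM := (π.cycleBlock c).max'_mem (π.cycleBlock_nonempty c)
  have hm := (π.cycleBlock e).max'_mem (π.cycleBlock_nonempty e)
  have hbM := (π.cycleBlock c).le_max' b hb
  have hMm := hmin e heD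
  simp only [mem_cycleBlock] at ha hce hM hm
  set M := (π.cycleBlock c).max' (π.cycleBlock_nonempty c)
  set m := (π.cycleBlock e).max' (π.cycleBlock_nonempty e)
  have hae' : a < e := hae.lt_of_ne fun h => hce (h ▸ ha)
  have heM : e < M := (heb.trans hbM).lt_of_ne fun h => hce (h ▸ hM)
  have hMm' : M < m := hMm.lt_of_ne fun h => hce (hM.trans (h ▸ hm).symm)
  exact hce (ha.trans (hπ hae' heM hMm' (ha.symm.trans hM) hm))

theorem IsNoncrossing.exists_cut (hπ : π.IsNoncrossing)
    (h : ∀ x y, π.SameCycle x y → σ.SameCycle x y)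
    (hlt : ∃ x y, σ.SameCycle x y ∧ ¬ π.SameCycle x y) :
    ∃ u v, u < v ∧ σ.SameCycle u v ∧
      ∀ x y, π.SameCycle x y → σ.SameCycle u x → (x ∈ Set.Ico u v ↔ y ∈ Set.Ico u v) := by
  obtain ⟨x₀, y₀, hxy₀, hnxy₀⟩ := hlt
  set D := σ.cycleBlock x₀
  obtain ⟨c, hcD, hconv⟩ := hπ.exists_cycleBlock_convex (σ.cycleBlock_nonempty x₀)
  have hCD : π.cycleBlock c ⊆ D := fun z hz =>
    mem_cycleBlock.2 ((mem_cycleBlock.1 hcD).trans (h c z (mem_cycleBlock.1 hz)))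
  have hCD' : π.cycleBlock c ≠ D := fun hCD' => hnxy₀ <| by
    have hx₀ : x₀ ∈ π.cycleBlock c := by rw [hCD']; exact mem_cycleBlock.2 .rfl
    have hy₀ : y₀ ∈ π.cycleBlock c := by rw [hCD']; exact mem_cycleBlock.2 hxy₀
    exact (mem_cycleBlock.1 hx₀).symm.trans (mem_cycleBlock.1 hy₀)
  obtain ⟨u, hu, v, hv, huv, hI⟩ :=
    exists_filter_Ico_eq_or_eq_sdiff hCD (π.cycleBlock_nonempty c) hCD' hconv
  refine ⟨u, v, huv, (mem_cycleBlock.1 hu).symm.trans (mem_cycleBlock.1 hv),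
    fun x y hxy hux => ?_⟩
  have hx : x ∈ D := mem_cycleBlock.2 ((mem_cycleBlock.1 hu).trans hux)
  have hy : y ∈ D := mem_cycleBlock.2 ((mem_cycleBlock.1 hx).trans (h x y hxy))
  have hcxy : x ∈ π.cycleBlock c ↔ y ∈ π.cycleBlock c := by
    simp only [mem_cycleBlock]
    exact ⟨(·.trans hxy), (·.trans hxy.symm)⟩
  have hx' : x ∈ Set.Ico u v ↔ x ∈ D.filter (· ∈ Set.Ico u v) := by simp [hx]
  have hy' : y ∈ Set.Ico u v ↔ y ∈ D.filter (· ∈ Set.Ico u v) := by simp [hy]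
  rcases hI with hI | hI <;> simp only [hx', hy', hI, mem_sdiff, hx, hy, true_and, hcxy]

theorem absLe_of_forall_sameCycle (hπ : π.HasIncreasingCycles) (hπn : π.IsNoncrossing)
    (hσ : σ.HasIncreasingCycles) (h : ∀ x y, π.SameCycle x y → σ.SameCycle x y) :
    absLe π σ := by
  induction hk : absLength σ using Nat.strong_induction_on generalizing σ with
  | _ k ih =>
    by_cases hall : ∀ x y, σ.SameCycle x y → π.SameCycle x y
    · rw [hπ.eq_of_sameCycle_iff hσ fun x y => ⟨h x y, hall x y⟩]
      exact absLe_refl σ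
    push Not at hall
    obtain ⟨u, v, huv, hs, hcut⟩ := hπn.exists_cut h hall
    have hle : absLe (swap u v * σ) σ := by
      simpa using absLe_swap_mul_of_not_sameCycle (not_sameCycle_swap_mul_of_sameCycle huv.ne hs)
    have hlt : absLength (swap u v * σ) < k := by
      have := numBlocks_swap_mul_of_sameCycle huv.ne hs
      have := numBlocks_le_card (swap u v * σ)
      rw [← hk, absLength_eq_card_sub_numBlocks, absLength_eq_card_sub_numBlocks]
      omega
    refine absLe_trans (ih _ hlt (hσ.swap_mul huv hs) (fun x y hxy => ?_) rfl) hle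
    rw [hσ.sameCycle_swap_mul_iff huv hs]
    exact ⟨h x y hxy, hcut x y hxy⟩

end Equiv.Perm

section LongCycle

def adjacentSwap (n j : ℕ) : Perm (Fin (n + 1)) :=
  if h : j < n then swap ⟨j, by omega⟩ ⟨j + 1, by omega⟩ else 1

theorem coxeterA_eq_prod_adjacentSwap (n : ℕ) :
    coxeterA n = ((List.range n).map (adjacentSwap n)).prod := by
  rw [coxeterA, List.ofFn_eq_map, ← List.map_coe_finRange_eq_range, List.map_map]
  congr 2
  ext i : 1
  simp only [Function.comp_apply, adjacentSwap, i.isLt, dif_pos]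
  rfl

theorem val_prod_adjacentSwap_apply {n k : ℕ} (hk : k ≤ n) (x : Fin (n + 1)) :
    (((List.range k).map (adjacentSwap n)).prod x : ℕ) =
      if (x : ℕ) < k then (x : ℕ) + 1 else if (x : ℕ) = k then 0 else (x : ℕ) := by
  induction k generalizing x with
  | zero =>
    simp only [List.range_zero, List.map_nil, List.prod_nil, Perm.one_apply]
    split_ifs <;> omega
  | succ k ih =>
    rw [List.range_succ, List.map_append, List.prod_append, List.map_singleton,
      List.prod_singleton, Perm.mul_apply, adjacentSwap, dif_pos (by omega : k < n),
      ih (by omega)]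
    have hswap : (swap (⟨k, by omega⟩ : Fin (n + 1)) ⟨k + 1, by omega⟩ x : ℕ) =
        if (x : ℕ) = k then k + 1 else if (x : ℕ) = k + 1 then k else x := by
      rw [swap_apply_def]
      split_ifs <;> simp_all [Fin.ext_iff]
    rw [hswap]
    split_ifs <;> omega

theorem coxeterA_apply (n : ℕ) (x : Fin (n + 1)) : coxeterA n x = x + 1 := by
  rw [coxeterA_eq_prod_adjacentSwap, Fin.ext_iff, val_prod_adjacentSwap_apply le_rfl,
    Fin.val_add_one]
  have := x.isLt
  split_ifs <;> simp_all [Fin.ext_iff]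
  omega

theorem cyclicNext_univ (n : ℕ) (x : Fin (n + 1)) :
    (univ : Finset (Fin (n + 1))).cyclicNext x = x + 1 := by
  rw [cyclicNext_eq_iff univ_nonempty]
  refine ⟨mem_univ _, ?_⟩
  obtain rfl | hx := eq_or_ne x (Fin.last n)
  · exact .inr ⟨fun z _ => Fin.le_last z, fun z _ => Fin.last_add_one n ▸ Fin.zero_le z⟩
  · exact .inl ⟨Fin.lt_add_one_iff.2 (lt_of_le_of_ne (Fin.le_last x) hx),
      fun z _ => Fin.add_one_le_of_lt⟩

theorem cycleBlock_coxeterA (n : ℕ) (x : Fin (n + 1)) : (coxeterA n).cycleBlock x = univ :=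
  Perm.cycleBlock_eq_of_apply_eq_cyclicNext (B := fun _ => univ) (fun _ => mem_univ _)
    (fun _ _ _ => rfl) (fun x => by rw [coxeterA_apply, cyclicNext_univ]) x

theorem sameCycle_coxeterA (n : ℕ) (x y : Fin (n + 1)) : (coxeterA n).SameCycle x y :=
  Perm.mem_cycleBlock.1 (cycleBlock_coxeterA n x ▸ mem_univ y)

theorem hasIncreasingCycles_coxeterA (n : ℕ) : (coxeterA n).HasIncreasingCycles := fun x => by
  rw [cycleBlock_coxeterA, coxeterA_apply, cyclicNext_univ]

theorem isNoncrossing_coxeterA (n : ℕ) : (coxeterA n).IsNoncrossing :=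
  fun a b _ _ _ _ _ _ _ => sameCycle_coxeterA n a b

end LongCycle

section Partitions

open Perm

variable {m : ℕ} {π σ : Perm (Fin m)}

theorem cycleBlocks_eq_range (π : Perm (Fin m)) : cycleBlocks π = Set.range π.cycleBlock := by
  ext B
  refine exists_congr fun x => ?_
  rw [eq_comm]
  -- the two filters differ only in their decidability instances
  congr!
  ext y
  simp

theorem refines_cycleBlocks_iff :
    Refines (cycleBlocks π) (cycleBlocks σ) ↔ ∀ x y, π.SameCycle x y → σ.SameCycle x y := by
  simp only [Refines, cycleBlocks_eq_range, Set.forall_mem_range, Set.exists_range_iff]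
  refine ⟨fun h x y hxy => ?_, fun h x => ⟨x, fun y hy => mem_cycleBlock.2
    (h x y (mem_cycleBlock.1 hy))⟩⟩
  obtain ⟨a, ha⟩ := h x
  exact (mem_cycleBlock.1 (ha (mem_cycleBlock.2 .rfl))).symm.trans
    (mem_cycleBlock.1 (ha (mem_cycleBlock.2 hxy)))

theorem Equiv.Perm.HasIncreasingCycles.eq_of_cycleBlocks_eq (hπ : π.HasIncreasingCycles)
    (hσ : σ.HasIncreasingCycles) (h : cycleBlocks π = cycleBlocks σ) : π = σ :=
  hπ.eq_of_sameCycle_iff hσ fun x y =>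
    ⟨refines_cycleBlocks_iff.1 (h ▸ fun B hB => ⟨B, hB, subset_rfl⟩) x y,
      refines_cycleBlocks_iff.1 (h ▸ fun B hB => ⟨B, hB, subset_rfl⟩) x y⟩

theorem isNCPartition_cycleBlocks (h : π.IsNoncrossing) : IsNCPartition (cycleBlocks π) := by
  simp only [IsNCPartition, cycleBlocks_eq_range, Set.forall_mem_range]
  refine ⟨π.cycleBlock_nonempty, fun x => ⟨π.cycleBlock x, ⟨⟨x, rfl⟩,
    mem_cycleBlock.2 .rfl⟩, ?_⟩, ?_⟩
  · rintro _ ⟨⟨y, rfl⟩, hx⟩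
    exact cycleBlock_eq_cycleBlock_iff.2 (mem_cycleBlock.1 hx)
  · rintro ⟨a, b, c, d, _, _, ⟨x, rfl⟩, ⟨y, rfl⟩, hne, hab, hbc, hcd, ha, hc, hb, hd⟩
    simp only [mem_cycleBlock] at ha hb hc hd
    exact hne (cycleBlock_eq_cycleBlock_iff.2 (ha.trans (h hab hbc hcd (ha.symm.trans hc)
      (hb.symm.trans hd)) |>.trans hb.symm))

theorem exists_hasIncreasingCycles_isNoncrossing {P : Set (Finset (Fin m))}
    (hP : IsNCPartition P) :
    ∃ π : Perm (Fin m), π.HasIncreasingCycles ∧ π.IsNoncrossing ∧ cycleBlocks π = P := by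
  obtain ⟨hne, huniq, hcross⟩ := hP
  choose B hBP hmem using fun x => (huniq x).exists
  have hB : ∀ x y, y ∈ B x → B y = B x := fun x y hy =>
    (huniq y).unique ⟨hBP y, hmem y⟩ ⟨hBP x, hy⟩
  obtain ⟨π, hπ, hπB⟩ := exists_hasIncreasingCycles hmem hB
  have hsame : ∀ x y, π.SameCycle x y ↔ y ∈ B x := fun x y => by
    rw [← mem_cycleBlock, hπB]
  refine ⟨π, hπ, fun a b c d hab hbc hcd hac hbd => ?_, ?_⟩
  · by_contra hab'
    refine hcross ⟨a, b, c, d, B a, B b, hBP a, hBP b, fun h => hab' ?_, hab, hbc, hcd,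
      hmem a, (hsame a c).1 hac, hmem b, (hsame b d).1 hbd⟩
    exact (hsame a b).2 (h ▸ hmem b)
  · ext C
    rw [cycleBlocks_eq_range, Set.mem_range]
    refine ⟨fun ⟨x, hx⟩ => hx ▸ hπB x ▸ hBP x, fun hC => ?_⟩
    obtain ⟨x, hx⟩ := hne C hC
    exact ⟨x, (hπB x).trans ((huniq x).unique ⟨hBP x, hmem x⟩ ⟨hC, hx⟩)⟩

end Partitions

/-- Biane's theorem: for `π ≤_T c` in `S_{n+1}` (with `c` the long cycle
`(1 2 ⋯ n+1)`), the cycle partition of `π` is a classical noncrossing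
partition, and `π ↦ {cycles of π}` is an order isomorphism from the poset of
noncrossing partitions of the symmetric group under absolute order onto the
poset of classical noncrossing partitions ordered by refinement. -/
theorem stmt2 (n : ℕ) :
    (∀ π : Equiv.Perm (Fin (n + 1)), absLe π (coxeterA n) → IsNCPartition (cycleBlocks π)) ∧
    Set.BijOn cycleBlocks {π | absLe π (coxeterA n)} {P | IsNCPartition P} ∧
    (∀ π σ : Equiv.Perm (Fin (n + 1)), absLe π (coxeterA n) → absLe σ (coxeterA n) →
      (absLe π σ ↔ Refines (cycleBlocks π) (cycleBlocks σ))) := by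
  have hc := hasIncreasingCycles_coxeterA n
  have hle : ∀ π, absLe π (coxeterA n) → π.HasIncreasingCycles ∧ π.IsNoncrossing :=
    fun π => Perm.hasIncreasingCycles_and_isNoncrossing_of_absLe hc (isNoncrossing_coxeterA n)
  have hnc : ∀ π, absLe π (coxeterA n) → IsNCPartition (cycleBlocks π) :=
    fun π h => isNCPartition_cycleBlocks (hle π h).2
  refine ⟨hnc, ⟨hnc, fun π hπ σ hσ h => ?_, fun P hP => ?_⟩, fun π σ hπ hσ => ?_⟩
  · exact (hle π hπ).1.eq_of_cycleBlocks_eq (hle σ hσ).1 h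
  · obtain ⟨π, hπ, hπn, rfl⟩ := exists_hasIncreasingCycles_isNoncrossing hP
    exact ⟨π, Perm.absLe_of_forall_sameCycle hπ hπn hc fun x y _ => sameCycle_coxeterA n x y, rfl⟩
  · rw [refines_cycleBlocks_iff]
    exact ⟨fun h _ _ => Perm.SameCycle.of_absLe h,
      Perm.absLe_of_forall_sameCycle (hle π hπ).1 (hle π hπ).2 (hle σ hσ).1⟩
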